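/- There are exactly g pointwise-fixed planes, i.e. exactly g three-dimensional F-subspaces W of V on which σ acts as multiplication by a scalar of F. Every fixed point of ℙ(F,V) lies in one of these g subspaces. Moreover, each pointwise-fixed plane W meets each Type-I S-plane K·v in a 1-dimensional F-subspace. -/
import Mathlib


open Module

noncomputable section

/-- The ambient 9-dimensional space `V = K³` (an `F`-space when `K` is an `F`-algebra). -/
abbrev VK (K : Type*) := K × K × K

/-- The semilinear map `σ(x,y,z) = (z^q, x^q, y^q)` of `V = K³`. -/
def sig (q : ℕ) {K : Type*} [Field K] (v : VK K) : VK K :=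
  (v.2.2 ^ q, v.1 ^ q, v.2.1 ^ q)

/-- The S-plane through `v`, i.e. the 3-dimensional `F`-subspace `K·v`. -/
def Splane (F : Type*) [Field F] {K : Type*} [Field K] [Algebra F K]
    (v : VK K) : Submodule F (VK K) :=
  Submodule.restrictScalars F (Submodule.span K {v})

/-- `[v]` is a fixed point: `σ(v) ∈ F·v`. -/
def IsFixedPt (F : Type*) [Field F] {K : Type*} [Field K] [Algebra F K]
    (q : ℕ) (v : VK K) : Prop :=
  sig q v ∈ Submodule.span F {v}

/-- `[v]` has collinear orbit: the `F`-span of `{v, σv, σ²v}` is 2-dimensional. -/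
def Collin (F : Type*) [Field F] {K : Type*} [Field K] [Algebra F K]
    (q : ℕ) (v : VK K) : Prop :=
  finrank F (Submodule.span F {v, sig q v, sig q (sig q v)}) = 2

/-- `[v]` has triangle orbit: `v, σv, σ²v` are `F`-linearly independent. -/
def Triangle (F : Type*) [Field F] {K : Type*} [Field K] [Algebra F K]
    (q : ℕ) (v : VK K) : Prop :=
  LinearIndependent F ![v, sig q v, sig q (sig q v)]

/-- The S-plane `K·v` has Type I: `σ(v) ∈ K·v`. -/
def TypeI {K : Type*} [Field K] (q : ℕ) (v : VK K) : Prop :=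
  sig q v ∈ Submodule.span K {v}

/-- The S-plane `K·v` has Type II: `v, σv, σ²v` `K`-dependent but `σ(v) ∉ K·v`. -/
def TypeII {K : Type*} [Field K] (q : ℕ) (v : VK K) : Prop :=
  ¬ LinearIndependent K ![v, sig q v, sig q (sig q v)] ∧
    sig q v ∉ Submodule.span K {v}

/-- The S-plane `K·v` has Type III: `v, σv, σ²v` are `K`-linearly independent. -/
def TypeIII {K : Type*} [Field K] (q : ℕ) (v : VK K) : Prop :=
  LinearIndependent K ![v, sig q v, sig q (sig q v)]

/-- `σ` acts on the subspace `W` as multiplication by a scalar of `F`. -/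
def ScalarOn {F : Type*} [Field F] {K : Type*} [Field K] [Algebra F K]
    (q : ℕ) (W : Submodule F (VK K)) : Prop :=
  ∃ c : F, ∀ v ∈ W, sig q v = c • v

/-- A pointwise-fixed plane: 3-dimensional `F`-subspace on which `σ` acts as a scalar. -/
def PtwisePlane {F : Type*} [Field F] {K : Type*} [Field K] [Algebra F K]
    (q : ℕ) (W : Submodule F (VK K)) : Prop :=
  finrank F W = 3 ∧ ScalarOn q W

/-- A fixed line: 2-dimensional `F`-subspace `L` with `σ(L) = L`. -/
def FixedLine {F : Type*} [Field F] {K : Type*} [Field K] [Algebra F K]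
    (q : ℕ) (L : Submodule F (VK K)) : Prop :=
  finrank F L = 2 ∧ sig q '' (L : Set (VK K)) = (L : Set (VK K))

/-- A pointwise-fixed line: fixed line on which `σ` acts as a scalar. -/
def PtwiseLine {F : Type*} [Field F] {K : Type*} [Field K] [Algebra F K]
    (q : ℕ) (L : Submodule F (VK K)) : Prop :=
  FixedLine q L ∧ ScalarOn q L

/-- A fixed-I-line: fixed line, not scalar, contained in some `K·v`. -/
def FixedILine {F : Type*} [Field F] {K : Type*} [Field K] [Algebra F K]
    (q : ℕ) (L : Submodule F (VK K)) : Prop :=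
  FixedLine q L ∧ ¬ ScalarOn q L ∧ ∃ v : VK K, v ≠ 0 ∧ L ≤ Splane F v

/-- A fixed-II-line: fixed line, not scalar, contained in no `K·v`. -/
def FixedIILine {F : Type*} [Field F] {K : Type*} [Field K] [Algebra F K]
    (q : ℕ) (L : Submodule F (VK K)) : Prop :=
  FixedLine q L ∧ ¬ ScalarOn q L ∧ ¬ ∃ v : VK K, v ≠ 0 ∧ L ≤ Splane F v

/-- A hwise-fixed-5-space: 6-dimensional `F`-subspace `W` with `σ(W) = W` such that the
map induced by `σ` on `V/W` is multiplication by a scalar. -/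
def HFix5 {F : Type*} [Field F] {K : Type*} [Field K] [Algebra F K]
    (q : ℕ) (W : Submodule F (VK K)) : Prop :=
  finrank F W = 6 ∧ sig q '' (W : Set (VK K)) = (W : Set (VK K)) ∧
    ∃ c : F, ∀ v : VK K, sig q v - c • v ∈ W

/-- An `H_I`-5-space: a 2-dimensional `K`-subspace `U` of `V` with `σ(U) = U`. -/
def HI5 {K : Type*} [Field K] (q : ℕ) (U : Submodule K (VK K)) : Prop :=
  finrank K U = 2 ∧ sig q '' (U : Set (VK K)) = (U : Set (VK K))

section AuxStmt1

variable {q : ℕ} {F : Type*} [Field F] [Fintype F] {K : Type*} [Field K] [Fintype K]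
  [Algebra F K]

/-- In a finite cyclic group, the number of solutions of `x ^ n = 1` is `gcd n |G|`. -/
lemma aux_card_pow_eq_one {G : Type*} [Group G] [Fintype G] [IsCyclic G] {n : ℕ} (hn : 0 < n) :
    Nat.card {x : G // x ^ n = 1} = Nat.gcd n (Fintype.card G) := by
  classical
  set m := Fintype.card G with hm
  set d := Nat.gcd n m with hd
  have hm0 : 0 < m := Fintype.card_pos
  have hd0 : 0 < d := Nat.gcd_pos_of_pos_left _ hn
  have hdm : d ∣ m := Nat.gcd_dvd_right n m
  have hdn : d ∣ n := Nat.gcd_dvd_left n m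
  have hset : ∀ x : G, x ^ n = 1 ↔ x ^ d = 1 := by
    intro x
    constructor
    · intro h
      exact orderOf_dvd_iff_pow_eq_one.mp
        (Nat.dvd_gcd (orderOf_dvd_of_pow_eq_one h) orderOf_dvd_card)
    · intro h
      obtain ⟨k, hk⟩ := hdn
      rw [hk, pow_mul, h, one_pow]
  have upper : Nat.card {x : G // x ^ n = 1} ≤ d := by
    rw [Nat.card_eq_fintype_card, Fintype.card_subtype]
    have hfe : (Finset.univ.filter fun x : G => x ^ n = 1)
        = (Finset.univ.filter fun x : G => x ^ d = 1) := by
      apply Finset.filter_congr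
      intro x _
      simp [hset x]
    rw [hfe]
    simpa using IsCyclic.card_pow_eq_one_le (α := G) hd0
  have lower : d ≤ Nat.card {x : G // x ^ n = 1} := by
    obtain ⟨g, hg⟩ := IsCyclic.exists_generator (α := G)
    have hog : orderOf g = m := by
      rw [orderOf_eq_card_of_forall_mem_zpowers hg, Nat.card_eq_fintype_card]
    set h : G := g ^ (m / d) with hhdef
    have hoh : orderOf h = d := by
      rw [hhdef, orderOf_pow, hog, Nat.gcd_eq_right (Nat.div_dvd_of_dvd hdm),
        Nat.div_div_self hdm hm0.ne']
    have hhn : h ^ n = 1 := orderOf_dvd_iff_pow_eq_one.mp (hoh ▸ hdn)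
    have key : ∀ k : ℕ, (h ^ k) ^ n = 1 := by
      intro k
      rw [← pow_mul, mul_comm, pow_mul, hhn, one_pow]
    have hinj : Function.Injective (fun k : Fin d => (⟨h ^ (k : ℕ), key k⟩ :
        {x : G // x ^ n = 1})) := by
      intro k₁ k₂ hk
      have : h ^ (k₁ : ℕ) = h ^ (k₂ : ℕ) := congrArg Subtype.val hk
      have := pow_injOn_Iio_orderOf (x := h) (by simpa [hoh] using k₁.isLt)
        (by simpa [hoh] using k₂.isLt) this
      exact Fin.ext this
    calc d = Nat.card (Fin d) := by simp
      _ ≤ Nat.card {x : G // x ^ n = 1} := Nat.card_le_card_of_injective _ hinj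
  omega

/-- In a finite field, the number of solutions of `x ^ n = 1` is `gcd n (|L| - 1)`. -/
lemma aux_card_root (L : Type*) [Field L] [Fintype L] {n : ℕ} (hn : 0 < n) :
    Nat.card {x : L // x ^ n = 1} = Nat.gcd n (Fintype.card L - 1) := by
  classical
  have e : {u : Lˣ // u ^ n = 1} ≃ {x : L // x ^ n = 1} := by
    refine Equiv.ofBijective (fun u => ⟨(u.1 : L), by
      rw [← Units.val_pow_eq_pow_val, u.2, Units.val_one]⟩) ⟨?_, ?_⟩
    · intro u₁ u₂ h
      exact Subtype.ext (Units.ext (congrArg Subtype.val h))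
    · rintro ⟨x, hx⟩
      have hx0 : x ≠ 0 := by
        rintro rfl
        rw [zero_pow hn.ne'] at hx
        exact zero_ne_one hx
      refine ⟨⟨Units.mk0 x hx0, ?_⟩, rfl⟩
      ext
      rw [Units.val_pow_eq_pow_val]
      simpa using hx
  rw [← Nat.card_congr e, aux_card_pow_eq_one hn, Fintype.card_units]

lemma aux_q_ne_zero (hF : Fintype.card F = q) : q ≠ 0 := by
  rw [← hF]; exact Fintype.card_ne_zero

lemma frob_add (hF : Fintype.card F = q) (x y : K) : (x + y) ^ q = x ^ q + y ^ q := by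
  obtain ⟨p, hp⟩ := CharP.exists F
  haveI := hp
  obtain ⟨n, hpn, hcard⟩ := FiniteField.card F p
  haveI : Fact p.Prime := ⟨hpn⟩
  haveI : CharP K p := charP_of_injective_algebraMap (algebraMap F K).injective p
  haveI : ExpChar K p := ExpChar.prime hpn
  have hq : q = p ^ (n : ℕ) := by rw [← hF, hcard]
  rw [hq]
  exact add_pow_expChar_pow x y p (n : ℕ)

lemma algmap_pow_q (hF : Fintype.card F = q) (a : F) :
    (algebraMap F K a) ^ q = algebraMap F K a := by
  rw [← map_pow]
  congr 1
  rw [← hF]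
  exact FiniteField.pow_card a

lemma pow_q_smul (hF : Fintype.card F = q) (a : F) (x : K) : (a • x) ^ q = a • x ^ q := by
  rw [Algebra.smul_def, Algebra.smul_def, mul_pow, algmap_pow_q hF]

lemma pow_qcube (hK : Fintype.card K = q ^ 3) (x : K) : ((x ^ q) ^ q) ^ q = x := by
  have h : x ^ (q * q * q) = ((x ^ q) ^ q) ^ q := by rw [pow_mul, pow_mul]
  rw [← h, show q * q * q = q ^ 3 by ring, ← hK]
  exact FiniteField.pow_card x

lemma sig_add (hF : Fintype.card F = q) (v w : VK K) :
    sig q (v + w) = sig q v + sig q w := by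
  obtain ⟨a, b, c⟩ := v
  obtain ⟨d, e, f⟩ := w
  simp [sig, Prod.ext_iff, frob_add hF]

lemma sig_Fsmul (hF : Fintype.card F = q) (a : F) (v : VK K) :
    sig q (a • v) = a • sig q v := by
  obtain ⟨x, y, z⟩ := v
  simp [sig, Prod.ext_iff, pow_q_smul hF]

lemma sig_Ksmul (lam : K) (v : VK K) : sig q (lam • v) = lam ^ q • sig q v := by
  obtain ⟨x, y, z⟩ := v
  simp [sig, Prod.ext_iff, mul_pow, smul_eq_mul]

lemma sig_sig_sig (hK : Fintype.card K = q ^ 3) (v : VK K) :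
    sig q (sig q (sig q v)) = v := by
  obtain ⟨x, y, z⟩ := v
  simp [sig, Prod.ext_iff, pow_qcube hK]

lemma sig_zero_iff (hF : Fintype.card F = q) {v : VK K} : sig q v = 0 ↔ v = 0 := by
  obtain ⟨x, y, z⟩ := v
  simp [sig, Prod.ext_iff, pow_eq_zero_iff (aux_q_ne_zero hF)]
  tauto

lemma VK_ne_zero {v : VK K} (h : v ≠ 0) : v.1 ≠ 0 ∨ v.2.1 ≠ 0 ∨ v.2.2 ≠ 0 := by
  by_contra hc
  push_neg at hc
  exact h (Prod.ext hc.1 (Prod.ext hc.2.1 hc.2.2))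

lemma Ksmul_cancel {a b : K} {v : VK K} (hv : v ≠ 0) (h : a • v = b • v) : a = b := by
  obtain ⟨x, y, z⟩ := v
  simp only [Prod.smul_mk, smul_eq_mul, Prod.mk.injEq] at h
  rcases VK_ne_zero hv with hx | hy | hz
  · exact mul_right_cancel₀ hx h.1
  · exact mul_right_cancel₀ hy h.2.1
  · exact mul_right_cancel₀ hz h.2.2

lemma Fsmul_cancel {a b : F} {v : VK K} (hv : v ≠ 0) (h : a • v = b • v) : a = b := by
  have h' : (algebraMap F K a) • v = (algebraMap F K b) • v := by
    rwa [algebraMap_smul, algebraMap_smul]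
  exact (algebraMap F K).injective (Ksmul_cancel hv h')

end AuxStmt1
section AuxStmt2

variable {q : ℕ} {F : Type*} [Field F] [Fintype F] {K : Type*} [Field K] [Fintype K]
  [Algebra F K]

/-- The eigenspace of `sig q` for the eigenvalue `c : F`. -/
def Esp (hF : Fintype.card F = q) (c : F) : Submodule F (VK K) where
  carrier := {v | sig q v = c • v}
  zero_mem' := by
    simp [sig, Prod.ext_iff, zero_pow (aux_q_ne_zero hF)]
  add_mem' := by
    intro v w hv hw
    simp only [Set.mem_setOf_eq] at *
    rw [sig_add hF, hv, hw, smul_add]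
  smul_mem' := by
    intro a v hv
    simp only [Set.mem_setOf_eq] at *
    rw [sig_Fsmul hF, hv, smul_comm]

lemma mem_Esp (hF : Fintype.card F = q) {c : F} {v : VK K} :
    v ∈ Esp hF c ↔ sig q v = c • v := Iff.rfl

lemma finrank_FK (hq : 2 < q) (hF : Fintype.card F = q) (hK : Fintype.card K = q ^ 3) :
    finrank F K = 3 := by
  have h := card_eq_pow_finrank (K := F) (V := K)
  rw [hF, hK] at h
  exact (Nat.pow_right_injective (by omega) h.symm)

/-- The parametrizing linear map of the eigenspace. -/
def espMap (hF : Fintype.card F = q) (c : F) : K →ₗ[F] VK K where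
  toFun := fun x => (x, (algebraMap F K c) ^ 2 * (x ^ q), algebraMap F K c * ((x ^ q) ^ q))
  map_add' := by
    intro x y
    have h1 : (x + y) ^ q = x ^ q + y ^ q := frob_add hF x y
    have h2 : ((x + y) ^ q) ^ q = (x ^ q) ^ q + (y ^ q) ^ q := by rw [h1, frob_add hF]
    simp [Prod.ext_iff, h1, h2, mul_add, frob_add hF]
  map_smul' := by
    intro a x
    have h1 : (a • x) ^ q = a • x ^ q := pow_q_smul hF a x
    have h2 : ((a • x) ^ q) ^ q = a • (x ^ q) ^ q := by rw [h1, pow_q_smul hF]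
    simp [Prod.ext_iff, h1, h2, Algebra.mul_smul_comm, pow_q_smul hF]

lemma espMap_inj (hF : Fintype.card F = q) (c : F) :
    Function.Injective (espMap (K := K) hF c) := by
  intro x y h
  exact congrArg Prod.fst h

lemma espMap_range (hF : Fintype.card F = q) (hK : Fintype.card K = q ^ 3)
    {c : F} (hc : c ^ 3 = 1) :
    LinearMap.range (espMap (K := K) hF c) = Esp hF c := by
  set c' : K := algebraMap F K c with hc'def
  have hc'q : c' ^ q = c' := algmap_pow_q hF c
  have hc'3 : c' ^ 3 = 1 := by
    rw [hc'def, ← map_pow, hc, map_one]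
  ext v
  simp only [LinearMap.mem_range, mem_Esp]
  constructor
  · rintro ⟨x, rfl⟩
    have h1 : (c' * (x ^ q) ^ q) ^ q = c' * x := by
      rw [mul_pow, hc'q, pow_qcube hK]
    have h2 : (c' ^ 2 * x ^ q) ^ q = c' ^ 2 * (x ^ q) ^ q := by
      rw [mul_pow, ← pow_mul, mul_comm 2 q, pow_mul, hc'q]
    have h3 : c' * (c' ^ 2 * x ^ q) = x ^ q := by
      rw [show c' * (c' ^ 2 * x ^ q) = c' ^ 3 * x ^ q by ring, hc'3, one_mul]
    show sig q (x, c' ^ 2 * x ^ q, c' * (x ^ q) ^ q) = c • (x, c' ^ 2 * x ^ q, c' * (x ^ q) ^ q)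
    rw [show (sig q (x, c' ^ 2 * x ^ q, c' * (x ^ q) ^ q) : VK K)
        = ((c' * (x ^ q) ^ q) ^ q, x ^ q, (c' ^ 2 * x ^ q) ^ q) from rfl,
      h1, h2, Prod.smul_mk, Prod.smul_mk, Algebra.smul_def, Algebra.smul_def,
      Algebra.smul_def, h3]
    exact Prod.ext rfl (Prod.ext rfl (by ring))
  · intro hv
    obtain ⟨x, y, z⟩ := v
    have hv' : (z ^ q, x ^ q, y ^ q) = (c' * x, c' * y, c' * z) := by
      have := hv
      simp only [sig] at this
      rw [this]
      refine Prod.ext ?_ (Prod.ext ?_ ?_)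
      · exact Algebra.smul_def c x
      · exact Algebra.smul_def c y
      · exact Algebra.smul_def c z
    obtain ⟨e1, e2, e3⟩ : z ^ q = c' * x ∧ x ^ q = c' * y ∧ y ^ q = c' * z := by
      simpa [Prod.ext_iff] using hv'
    refine ⟨x, ?_⟩
    show (x, c' ^ 2 * x ^ q, c' * (x ^ q) ^ q) = (x, y, z)
    refine Prod.ext rfl (Prod.ext ?_ ?_)
    · show c' ^ 2 * x ^ q = y
      rw [e2, show c' ^ 2 * (c' * y) = c' ^ 3 * y by ring, hc'3, one_mul]
    · show c' * (x ^ q) ^ q = z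
      rw [e2, mul_pow, hc'q, e3, show c' * (c' * (c' * z)) = c' ^ 3 * z by ring, hc'3, one_mul]

lemma finrank_Esp (hq : 2 < q) (hF : Fintype.card F = q) (hK : Fintype.card K = q ^ 3)
    {c : F} (hc : c ^ 3 = 1) : finrank F (Esp (K := K) hF c) = 3 := by
  rw [← espMap_range hF hK hc, LinearMap.finrank_range_of_inj (espMap_inj hF c),
    finrank_FK hq hF hK]

lemma Esp_ptwise (hq : 2 < q) (hF : Fintype.card F = q) (hK : Fintype.card K = q ^ 3)
    {c : F} (hc : c ^ 3 = 1) : PtwisePlane q (Esp (K := K) hF c) :=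
  ⟨finrank_Esp hq hF hK hc, c, fun _ hv => hv⟩

/-- A canonical nonzero element of the eigenspace. -/
lemma Esp_wit (hF : Fintype.card F = q) (hK : Fintype.card K = q ^ 3) {c : F} (hc : c ^ 3 = 1) :
    ((1 : K), (algebraMap F K c) ^ 2, algebraMap F K c) ∈ Esp (K := K) hF c ∧
      ((1 : K), (algebraMap F K c) ^ 2, algebraMap F K c) ≠ 0 := by
  constructor
  · rw [← espMap_range hF hK hc]
    exact ⟨1, by simp [espMap]⟩
  · intro h0
    rw [Prod.ext_iff] at h0
    exact one_ne_zero h0.1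

lemma cube_eq_one_of_scalar (hq : 2 < q) (hF : Fintype.card F = q)
    (hK : Fintype.card K = q ^ 3) {c : F} {w : VK K} (hw0 : w ≠ 0)
    (hw : sig q w = c • w) : c ^ 3 = 1 := by
  have e1 : sig q (sig q w) = (c * c) • w := by
    rw [hw, sig_Fsmul hF, hw, smul_smul]
  have e2 : sig q (sig q (sig q w)) = (c * c * c) • w := by
    rw [e1, sig_Fsmul hF, hw, smul_smul]
  rw [sig_sig_sig hK] at e2
  have h0 : (c * c * c) • w = (1 : F) • w := by rw [one_smul, ← e2]
  have hcc : c * c * c = 1 := Fsmul_cancel hw0 h0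
  calc c ^ 3 = c * c * c := by ring
    _ = 1 := hcc

lemma ptwise_eq_Esp (hq : 2 < q) (hF : Fintype.card F = q) (hK : Fintype.card K = q ^ 3)
    {W : Submodule F (VK K)} (hW : PtwisePlane q W) :
    ∃ c : F, c ^ 3 = 1 ∧ W = Esp hF c := by
  obtain ⟨hrk, c, hc⟩ := hW
  have hWne : W ≠ ⊥ := by
    intro h
    rw [h, finrank_bot] at hrk
    omega
  obtain ⟨w, hwW, hw0⟩ := Submodule.exists_mem_ne_zero_of_ne_bot hWne
  have hc3 : c ^ 3 = 1 := cube_eq_one_of_scalar hq hF hK hw0 (hc w hwW)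
  refine ⟨c, hc3, ?_⟩
  have hle : W ≤ Esp hF c := fun v hv => hc v hv
  exact Submodule.eq_of_le_of_finrank_eq hle (by rw [hrk, finrank_Esp hq hF hK hc3])

end AuxStmt2
section AuxStmt3

variable {q : ℕ} {F : Type*} [Field F] [Fintype F] {K : Type*} [Field K] [Fintype K]
  [Algebra F K]

/-- The fixed field of the `q`-power Frobenius on `K` is (the image of) `F`. -/
lemma fixed_field (hq : 2 < q) (hF : Fintype.card F = q) {t : K} (ht : t ^ q = t) :
    ∃ a : F, algebraMap F K a = t := by
  classical
  by_contra hcon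
  push_neg at hcon
  set P : Polynomial K := Polynomial.X ^ q - Polynomial.X with hP
  have hdeg : P.natDegree = q := by
    rw [hP, Polynomial.natDegree_sub_eq_left_of_natDegree_lt, Polynomial.natDegree_X_pow]
    rw [Polynomial.natDegree_X_pow, Polynomial.natDegree_X]
    omega
  have hP0 : P ≠ 0 := by
    intro h0
    rw [h0, Polynomial.natDegree_zero] at hdeg
    omega
  have hroot : ∀ s : K, s ^ q = s → s ∈ P.roots := by
    intro s hs
    rw [Polynomial.mem_roots hP0]
    simp [hP, Polynomial.IsRoot, hs]
  set S : Finset K := insert t (Finset.univ.image (algebraMap F K)) with hS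
  have htS : t ∉ Finset.univ.image (algebraMap F K) := by
    intro h
    obtain ⟨a, _, ha⟩ := Finset.mem_image.mp h
    exact hcon a ha
  have hcard : S.card = q + 1 := by
    rw [hS, Finset.card_insert_of_notMem htS,
      Finset.card_image_of_injective _ (algebraMap F K).injective, Finset.card_univ, hF]
  have hsub : S ⊆ P.roots.toFinset := by
    intro s hs
    rw [Multiset.mem_toFinset]
    rcases Finset.mem_insert.mp hs with rfl | hs
    · exact hroot s ht
    · obtain ⟨a, _, rfl⟩ := Finset.mem_image.mp hs
      exact hroot _ (algmap_pow_q hF a)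
  have hle : S.card ≤ q := by
    calc S.card ≤ P.roots.toFinset.card := Finset.card_le_card hsub
      _ ≤ Multiset.card P.roots := Multiset.toFinset_card_le _
      _ ≤ P.natDegree := Polynomial.card_roots' P
      _ = q := hdeg
  omega

/-- Solvability of `t ^ (q-1) = d` for `d` of norm one. -/
lemma exists_root (hq : 2 < q) (hK : Fintype.card K = q ^ 3) {d : K} (hd0 : d ≠ 0)
    (hd : d ^ (q * q + q + 1) = 1) : ∃ t : K, t ≠ 0 ∧ t ^ (q - 1) = d := by
  classical
  set a := q - 1 with hadef
  set s := q * q + q + 1 with hsdef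
  have ha1 : a + 1 = q := by omega
  have ha0 : 0 < a := by omega
  have hs0 : 0 < s := by positivity
  have hqcube : q ^ 3 = a * s + 1 := by
    rw [← ha1, hsdef, ← ha1]; ring
  have hm : Fintype.card Kˣ = a * s := by
    rw [Fintype.card_units, hK, hqcube]
    omega
  set f : Kˣ →* Kˣ := powMonoidHom a with hfdef
  set A : Subgroup Kˣ := (powMonoidHom s : Kˣ →* Kˣ).ker with hAdef
  have hker : Nat.card f.ker = a := by
    have he : {x : Kˣ // x ∈ f.ker} ≃ {x : Kˣ // x ^ a = 1} :=
      Equiv.subtypeEquivRight (fun x => by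
        simp [hfdef, MonoidHom.mem_ker, powMonoidHom_apply])
    rw [Nat.card_congr he, aux_card_pow_eq_one ha0, hm]
    exact Nat.gcd_eq_left ⟨s, rfl⟩
  have hcardA : Nat.card A = s := by
    have he : {x : Kˣ // x ∈ A} ≃ {x : Kˣ // x ^ s = 1} :=
      Equiv.subtypeEquivRight (fun x => by
        simp [hAdef, MonoidHom.mem_ker, powMonoidHom_apply])
    rw [Nat.card_congr he, aux_card_pow_eq_one hs0, hm]
    exact Nat.gcd_eq_left ⟨a, mul_comm a s⟩
  have hle : f.range ≤ A := by
    rintro x ⟨y, rfl⟩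
    show f y ^ s = 1
    rw [hfdef, powMonoidHom_apply, ← pow_mul, ← hm]
    exact pow_card_eq_one
  have hrange : Nat.card f.range = s := by
    have h1 := Subgroup.card_eq_card_quotient_mul_card_subgroup f.ker
    have h2 : Nat.card (Kˣ ⧸ f.ker) = Nat.card f.range :=
      Nat.card_congr (QuotientGroup.quotientKerEquivRange f).toEquiv
    rw [h2, hker] at h1
    have h3 : Nat.card Kˣ = a * s := by rw [Nat.card_eq_fintype_card, hm]
    rw [h3, mul_comm (Nat.card f.range) a] at h1
    exact (Nat.eq_of_mul_eq_mul_left ha0 h1.symm)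
  have heq : f.range = A := Subgroup.eq_of_le_of_card_ge hle (by rw [hrange, hcardA])
  set u : Kˣ := Units.mk0 d hd0 with hudef
  have hu : u ∈ A := by
    show u ^ s = 1
    ext
    rw [Units.val_pow_eq_pow_val]
    simpa [hudef] using hd
  rw [← heq] at hu
  obtain ⟨y, hy⟩ := hu
  refine ⟨(y : K), y.ne_zero, ?_⟩
  have hval : ((f y : Kˣ) : K) = d := by rw [hy]; simp [hudef]
  rw [hfdef, powMonoidHom_apply, Units.val_pow_eq_pow_val] at hval
  rw [hadef]
  exact hval

/-- The kernel submodule `{t | μ t^q = γ t}`. -/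
def Fker (hF : Fintype.card F = q) (μ γ : K) : Submodule F K where
  carrier := {t | μ * t ^ q = γ * t}
  zero_mem' := by simp [zero_pow (aux_q_ne_zero hF)]
  add_mem' := by
    intro x y hx hy
    simp only [Set.mem_setOf_eq] at *
    rw [frob_add hF, mul_add, hx, hy, mul_add]
  smul_mem' := by
    intro a x hx
    simp only [Set.mem_setOf_eq] at *
    rw [pow_q_smul hF, Algebra.mul_smul_comm, hx, Algebra.mul_smul_comm]

lemma mem_Fker (hF : Fintype.card F = q) {μ γ t : K} :
    t ∈ Fker hF μ γ ↔ μ * t ^ q = γ * t := Iff.rfl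

lemma inter_rank (hq : 2 < q) (hF : Fintype.card F = q) (hK : Fintype.card K = q ^ 3)
    {c : F} (hc : c ^ 3 = 1) {v : VK K} (hv0 : v ≠ 0) (hI : TypeI q v) :
    finrank F ↥(Esp hF c ⊓ Splane F v) = 1 := by
  have hq0 : q ≠ 0 := aux_q_ne_zero hF
  obtain ⟨μ, hμ⟩ : ∃ μ : K, μ • v = sig q v := Submodule.mem_span_singleton.mp hI
  have hμ0 : μ ≠ 0 := by
    rintro rfl
    rw [zero_smul] at hμ
    exact hv0 ((sig_zero_iff hF).mp hμ.symm)
  -- the norm of μ is 1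
  have hN : (μ ^ q) ^ q * μ ^ q * μ = 1 := by
    have e2 : sig q (sig q v) = (μ ^ q * μ) • v := by
      rw [← hμ, sig_Ksmul, ← hμ, smul_smul]
    have e3 : sig q (sig q (sig q v)) = ((μ ^ q * μ) ^ q * μ) • v := by
      rw [e2, sig_Ksmul, ← hμ, smul_smul]
    rw [sig_sig_sig hK] at e3
    have h0 : ((μ ^ q * μ) ^ q * μ) • v = (1 : K) • v := by rw [one_smul, ← e3]
    have h1 : (μ ^ q * μ) ^ q * μ = 1 := Ksmul_cancel hv0 h0
    rw [mul_pow] at h1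
    exact h1
  set c' : K := algebraMap F K c with hc'def
  have hc'q : c' ^ q = c' := algmap_pow_q hF c
  have hc'3 : c' ^ 3 = 1 := by rw [hc'def, ← map_pow, hc, map_one]
  have hc'0 : c' ≠ 0 := by
    intro h
    rw [h] at hc'3
    simp at hc'3
  have hμs : μ ^ (q * q + q + 1) = 1 := by
    rw [pow_add, pow_add, pow_one, pow_mul]
    exact hN
  have hc's : c' ^ (q * q + q + 1) = 1 := by
    have h1 : c' ^ (q * q) = c' := by rw [pow_mul, hc'q, hc'q]
    rw [pow_add, pow_add, pow_one, h1, hc'q, show c' * c' * c' = c' ^ 3 from by ring, hc'3]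
  set d : K := c' * μ⁻¹ with hddef
  have hd0 : d ≠ 0 := mul_ne_zero hc'0 (inv_ne_zero hμ0)
  have hds : d ^ (q * q + q + 1) = 1 := by
    rw [hddef, mul_pow, hc's, inv_pow, hμs, inv_one, mul_one]
  obtain ⟨t0, ht00, ht0⟩ := exists_root hq hK hd0 hds
  have ht0q : t0 ^ q = d * t0 := by
    rw [show q = (q - 1) + 1 from by omega, pow_succ, ht0]
  have hmem0 : t0 ∈ Fker hF μ c' := by
    rw [mem_Fker hF, ht0q, hddef,
      show μ * (c' * μ⁻¹ * t0) = (μ * μ⁻¹) * (c' * t0) from by ring,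
      mul_inv_cancel₀ hμ0, one_mul]
  have hmem0' : μ * t0 ^ q = c' * t0 := hmem0
  have hFk : Fker hF μ c' = Submodule.span F {t0} := by
    apply le_antisymm
    · intro t htk
      have htk' : μ * t ^ q = c' * t := htk
      rw [Submodule.mem_span_singleton]
      by_cases ht : t = 0
      · exact ⟨0, by simp [ht]⟩
      · have hkey : t ^ q * t0 = t0 ^ q * t := by
          have h1 : μ * (t ^ q * t0) = μ * (t0 ^ q * t) := by
            calc μ * (t ^ q * t0) = (μ * t ^ q) * t0 := by ring
              _ = (c' * t) * t0 := by rw [htk']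
              _ = (c' * t0) * t := by ring
              _ = (μ * t0 ^ q) * t := by rw [hmem0']
              _ = μ * (t0 ^ q * t) := by ring
          exact mul_left_cancel₀ hμ0 h1
        have ht0q0 : t0 ^ q ≠ 0 := pow_ne_zero _ ht00
        have htt : (t * t0⁻¹) ^ q = t * t0⁻¹ := by
          rw [mul_pow, inv_pow]
          field_simp
          linear_combination hkey
        obtain ⟨a2, ha2⟩ := fixed_field hq hF htt
        refine ⟨a2, ?_⟩
        rw [Algebra.smul_def, ha2]
        field_simp
    · rw [Submodule.span_le, Set.singleton_subset_iff]
      exact hmem0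
  set Φ : K →ₗ[F] VK K :=
    { toFun := fun t => t • v
      map_add' := fun s t => add_smul s t v
      map_smul' := fun a t => by simpa using smul_assoc a t v } with hΦdef
  have hΦinj : Function.Injective Φ := by
    intro s t h
    have h' : s • v = t • v := h
    exact Ksmul_cancel hv0 h'
  have hbig : Esp hF c ⊓ Splane F v = Submodule.map Φ (Fker hF μ c') := by
    ext w
    simp only [Submodule.mem_inf, Submodule.mem_map]
    constructor
    · rintro ⟨hwE, hwS⟩
      have hwS' : w ∈ Submodule.span K {v} := hwS
      obtain ⟨t, rfl⟩ : ∃ t : K, t • v = w := Submodule.mem_span_singleton.mp hwS'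
      refine ⟨t, ?_, rfl⟩
      have hE : sig q (t • v) = c • (t • v) := hwE
      rw [sig_Ksmul, ← hμ, smul_smul] at hE
      have hcv : (c' * t) • v = c • (t • v) := by
        rw [hc'def, ← Algebra.smul_def]
        exact smul_assoc c t v
      rw [← hcv] at hE
      have hE' := Ksmul_cancel hv0 hE
      rw [mem_Fker hF, mul_comm]
      exact hE'
    · rintro ⟨t, htk, rfl⟩
      have htk' : μ * t ^ q = c' * t := htk
      constructor
      · show sig q (t • v) = c • (t • v)
        rw [sig_Ksmul, ← hμ, smul_smul,
          show t ^ q * μ = c' * t from by rw [mul_comm]; exact htk',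
          hc'def, ← Algebra.smul_def]
        exact smul_assoc c t v
      · show (t • v : VK K) ∈ Submodule.span K {v}
        exact Submodule.smul_mem _ t (Submodule.mem_span_singleton_self v)
  have hfr := (Submodule.equivMapOfInjective Φ hΦinj (Fker hF μ c')).finrank_eq
  rw [hbig, ← hfr, hFk, finrank_span_singleton ht00]

end AuxStmt3
/-- there are exactly g pointwise-fixed planes; every fixed point lies in
one of them; each pointwise-fixed plane meets each Type-I S-plane in a 1-dimensional
F-subspace. -/
theorem stmt1 (q : ℕ) (hq : 2 < q)
    (F : Type*) [Field F] [Fintype F] (K : Type*) [Field K] [Fintype K]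
    [Algebra F K] (hF : Fintype.card F = q) (hK : Fintype.card K = q ^ 3) :
    Nat.card {W : Submodule F (VK K) // PtwisePlane q W} = Nat.gcd 3 (q - 1) ∧
    (∀ v : VK K, v ≠ 0 → IsFixedPt F q v →
      ∃ W : Submodule F (VK K), PtwisePlane q W ∧ v ∈ W) ∧
    (∀ W : Submodule F (VK K), PtwisePlane q W →
      ∀ v : VK K, v ≠ 0 → TypeI q v →
        finrank F ↥(W ⊓ Splane F v) = 1) := by
  refine ⟨?_, ?_, ?_⟩
  · -- exactly g pointwise-fixed planes
    have hbij : Function.Bijective (fun c : {c : F // c ^ 3 = 1} =>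
        (⟨Esp hF c.1, Esp_ptwise hq hF hK c.2⟩ :
          {W : Submodule F (VK K) // PtwisePlane q W})) := by
      constructor
      · rintro ⟨c1, hc1⟩ ⟨c2, hc2⟩ h
        have hE : Esp (K := K) hF c1 = Esp hF c2 := congrArg Subtype.val h
        obtain ⟨hwmem, hw0⟩ := Esp_wit (K := K) hF hK hc1
        have h2 := hE ▸ hwmem
        have e1 : sig q ((1 : K), (algebraMap F K c1) ^ 2, algebraMap F K c1)
            = c1 • ((1 : K), (algebraMap F K c1) ^ 2, algebraMap F K c1) := hwmem
        have e2 : sig q ((1 : K), (algebraMap F K c1) ^ 2, algebraMap F K c1)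
            = c2 • ((1 : K), (algebraMap F K c1) ^ 2, algebraMap F K c1) := h2
        exact Subtype.ext (Fsmul_cancel hw0 (e1.symm.trans e2))
      · rintro ⟨W, hW⟩
        obtain ⟨c, hc3, rfl⟩ := ptwise_eq_Esp hq hF hK hW
        exact ⟨⟨c, hc3⟩, rfl⟩
    rw [← Nat.card_eq_of_bijective _ hbij, aux_card_root F (by norm_num : (0:ℕ) < 3), hF]
  · -- every fixed point lies in a pointwise-fixed plane
    intro v hv0 hfix
    obtain ⟨a, ha⟩ := Submodule.mem_span_singleton.mp hfix
    have hsig : sig q v = a • v := ha.symm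
    have ha3 : a ^ 3 = 1 := cube_eq_one_of_scalar hq hF hK hv0 hsig
    exact ⟨Esp hF a, Esp_ptwise hq hF hK ha3, (mem_Esp hF).mpr hsig⟩
  · -- intersection with Type I S-planes
    intro W hW v hv0 hI
    obtain ⟨c, hc3, rfl⟩ := ptwise_eq_Esp hq hF hK hW
    exact inter_rank hq hF hK hc3 hv0 hI
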